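/- arXiv:2111.03293 — 4 statements merged into one kernel-verified Lean document; each statement's English description precedes it below -/
import Mathlib

section
/- Let γ(s) = (y(s), z(s)) be a unit-speed planar curve whose signed curvature is constant and satisfies κ = z(s)^n + μ for an odd integer n ≥ 1 and real μ. Then κ = 0, z is the constant function z(s) = (-μ)^(1/n), and γ is a horizontal straight line. -/
/-- A unit-speed planar curve `γ(s) = (y s, z s)` with constant signed curvature
satisfying `κ = zⁿ + μ` for an odd integer `n ≥ 1` must be a horizontal straight line:
`κ = 0`, `z` is constant with `z(0)ⁿ = -μ` (i.e. `z ≡ (-μ)^(1/n)`), and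
`y(s) = y(0) ± s`. -/
theorem constant_curvature_horizontal_line
    (n : ℕ) (hodd : Odd n) (hn1 : 1 ≤ n) (μ : ℝ)
    (y z y' z' y'' z'' κ : ℝ → ℝ)
    (hy : ∀ s, HasDerivAt y (y' s) s) (hz : ∀ s, HasDerivAt z (z' s) s)
    (hy' : ∀ s, HasDerivAt y' (y'' s) s) (hz' : ∀ s, HasDerivAt z' (z'' s) s)
    (hunit : ∀ s, y' s ^ 2 + z' s ^ 2 = 1)
    (hκ : ∀ s, κ s = y' s * z'' s - z' s * y'' s)
    (hconst : ∀ s t, κ s = κ t)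
    (heq : ∀ s, κ s = z s ^ n + μ) :
    (∀ s, κ s = 0) ∧ (∀ s, z s = z 0) ∧ (z 0) ^ n = -μ ∧
      ((∀ s, y s = y 0 + s) ∨ (∀ s, y s = y 0 - s)) := by
  -- z is constant since z^n is constant and x ↦ x^n is injective for odd n
  have hz0 : ∀ s, z s = z 0 := by
    intro s
    have h1 : z s ^ n = z 0 ^ n := by
      have h := hconst s 0
      rw [heq s, heq 0] at h; linarith
    exact hodd.strictMono_pow.injective h1
  -- z' = 0
  have hzeq : z = fun _ => z 0 := funext hz0
  have hz'0 : ∀ s, z' s = 0 := by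
    intro s
    have h := hz s
    rw [hzeq] at h
    exact h.unique (hasDerivAt_const s (z 0))
  -- z'' = 0
  have hz''0 : ∀ s, z'' s = 0 := by
    intro s
    have h := hz' s
    rw [funext hz'0] at h
    exact h.unique (hasDerivAt_const s (0 : ℝ))
  have hκ0 : ∀ s, κ s = 0 := by
    intro s; rw [hκ s, hz'0 s, hz''0 s]; ring
  have hzn : (z 0) ^ n = -μ := by
    have := heq 0; rw [hκ0 0] at this; linarith
  refine ⟨hκ0, hz0, hzn, ?_⟩
  -- y' takes values in {1, -1}
  have hy'sq : ∀ s, y' s ^ 2 = 1 := by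
    intro s; have := hunit s; rw [hz'0 s] at this; nlinarith
  have hy'cases : ∀ s, y' s = 1 ∨ y' s = -1 := by
    intro s
    have h : (y' s - 1) * (y' s + 1) = 0 := by nlinarith [hy'sq s]
    rcases mul_eq_zero.mp h with h | h
    · left; linarith
    · right; linarith
  have hy'cont : Continuous y' :=
    continuous_iff_continuousAt.mpr fun s => (hy' s).continuousAt
  -- y' is constant by IVT
  have hy'const : ∀ s, y' s = y' 0 := by
    intro s
    by_contra hne
    have hmem : (0 : ℝ) ∈ Set.uIcc (y' 0) (y' s) := by
      rcases hy'cases 0 with h0 | h0 <;> rcases hy'cases s with hs | hs <;> first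
        | (exact absurd (hs.trans h0.symm) hne)
        | (rw [h0, hs, Set.mem_uIcc]; norm_num)
    obtain ⟨c, _, hc⟩ := intermediate_value_uIcc hy'cont.continuousOn hmem
    have := hy'sq c
    rw [hc] at this
    norm_num at this
  -- y s = y 0 + y' 0 * s
  have hylin : ∀ s, y s = y 0 + y' 0 * s := by
    intro s
    have hdiff : Differentiable ℝ (fun t => y t - y' 0 * t) := by
      intro t
      exact ((hy t).sub ((hasDerivAt_id t).const_mul (y' 0))).differentiableAt
    have hd0 : ∀ t, deriv (fun t => y t - y' 0 * t) t = 0 := by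
      intro t
      have h : HasDerivAt (fun t => y t - y' 0 * t) (y' t - y' 0 * 1) t :=
        (hy t).sub ((hasDerivAt_id t).const_mul (y' 0))
      rw [h.deriv, hy'const t]; ring
    have := is_const_of_deriv_eq_zero hdiff hd0 s 0
    simp at this
    linarith
  rcases hy'cases 0 with h | h
  · left; intro s; rw [hylin s, h]; ring
  · right; intro s; rw [hylin s, h]; ring
end

section
/- Let n ≤ -1 be a real number and let γ(s) = (y(s), z(s)), defined on an interval I, be a unit-speed planar curve with z(s) > 0 on the interior of I whose curvature satisfies κ(s) = z(s)^n + μ, and suppose the first integral (1/(n+1)) z^{n+1} + μ z + ε√(1 - z'²) = c holds on I (with the log version when n = -1). Then z(s) cannot tend to 0 as s approaches any endpoint s₁ of I at which z' stays bounded; i.e., z is bounded away from 0 near points where the first integral remains valid. In particular, the curve cannot meet the line z = 0. -/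
/-- For `n ≤ -1`, along an `n`-elastic curve (whose height `z` satisfies the first
integral `(1/(n+1)) z^(n+1) + μ z + ε√(1-z'²) = c`, resp. the log version when
`n = -1`), the function `z` cannot tend to `0` as `s` approaches any point `s₁`
adherent to the interval `I`; in particular the curve cannot meet the line `z = 0`. -/
theorem cannot_meet_y_line
    (n μ c ε : ℝ) (hn : n ≤ -1) (hε : ε = 1 ∨ ε = -1)
    (I : Set ℝ) (z z' : ℝ → ℝ)
    (hzpos : ∀ s ∈ I, 0 < z s)
    (hz' : ∀ s ∈ I, |z' s| ≤ 1)
    (hFI : (n ≠ -1 ∧ ∀ s ∈ I,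
              1/(n+1) * z s ^ (n+1) + μ * z s + ε * Real.sqrt (1 - z' s ^ 2) = c)
         ∨ (n = -1 ∧ ∀ s ∈ I,
              Real.log (z s) + μ * z s + ε * Real.sqrt (1 - z' s ^ 2) = c)) :
    (∀ s₁ : ℝ, (nhdsWithin s₁ I).NeBot →
        ¬ Filter.Tendsto z (nhdsWithin s₁ I) (nhds 0)) ∧
    (∀ s ∈ I, z s ≠ 0) := by
  constructor
  · intro s₁ hne htend
    -- z tends to 0 within the positive reals
    have hz0 : Filter.Tendsto z (nhdsWithin s₁ I) (nhdsWithin 0 (Set.Ioi 0)) := by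
      refine tendsto_nhdsWithin_iff.mpr ⟨htend, ?_⟩
      filter_upwards [eventually_mem_nhdsWithin] with s hs using hzpos s hs
    have hz1 : ∀ᶠ s in nhdsWithin s₁ I, |z s| ≤ 1 := by
      have hmem : Set.Icc (-1 : ℝ) 1 ∈ nhds (0 : ℝ) :=
        Icc_mem_nhds (by norm_num) (by norm_num)
      filter_upwards [htend hmem] with s hs
      rw [abs_le]; exact hs
    -- key pointwise lower bound for the "bounded" part
    have key : ∀ s ∈ I, |z s| ≤ 1 →
        -(|c| + |μ| + 1) ≤ c - μ * z s - ε * Real.sqrt (1 - z' s ^ 2) := by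
      intro s hs habs
      have h1 : μ * z s ≤ |μ| := by
        calc μ * z s ≤ |μ * z s| := le_abs_self _
          _ = |μ| * |z s| := abs_mul _ _
          _ ≤ |μ| * 1 := mul_le_mul_of_nonneg_left habs (abs_nonneg μ)
          _ = |μ| := mul_one _
      have hS0 : 0 ≤ Real.sqrt (1 - z' s ^ 2) := Real.sqrt_nonneg _
      have hS1 : Real.sqrt (1 - z' s ^ 2) ≤ 1 := by
        have : (1 : ℝ) - z' s ^ 2 ≤ 1 := by nlinarith [sq_nonneg (z' s)]
        calc Real.sqrt (1 - z' s ^ 2) ≤ Real.sqrt 1 := Real.sqrt_le_sqrt this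
          _ = 1 := Real.sqrt_one
      have h2 : ε * Real.sqrt (1 - z' s ^ 2) ≤ 1 := by
        rcases hε with h | h <;> rw [h] <;> nlinarith
      have h3 : -c ≤ |c| := neg_le_abs c
      linarith
    rcases hFI with ⟨hne1, hFI⟩ | ⟨heq, hFI⟩
    · -- n < -1 : the rpow term blows up
      have hn1 : n + 1 < 0 := by
        rcases lt_or_eq_of_le hn with h | h
        · linarith
        · exact absurd h hne1
      have hrpow : Filter.Tendsto (fun s => z s ^ (n + 1)) (nhdsWithin s₁ I)
          Filter.atTop := by
        have h1 : Filter.Tendsto (fun x : ℝ => x ^ (n + 1)) (nhdsWithin 0 (Set.Ioi 0))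
            Filter.atTop := by
          have h2 : Filter.Tendsto (fun x : ℝ => (x⁻¹) ^ (-(n + 1)))
              (nhdsWithin 0 (Set.Ioi 0)) Filter.atTop :=
            (tendsto_rpow_atTop (by linarith)).comp tendsto_inv_nhdsGT_zero
          refine h2.congr' ?_
          filter_upwards [self_mem_nhdsWithin] with x hx
          rw [Real.inv_rpow (le_of_lt hx), Real.rpow_neg (le_of_lt hx), inv_inv]
        exact h1.comp hz0
      have hbig : ∀ᶠ s in nhdsWithin s₁ I,
          (n + 1) * (-(|c| + |μ| + 1)) < z s ^ (n + 1) :=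
        hrpow.eventually_gt_atTop _
      have : ∀ᶠ s in nhdsWithin s₁ I, False := by
        filter_upwards [hbig, hz1, eventually_mem_nhdsWithin] with s hb h1 hs
        have hE := hFI s hs
        have hk := key s hs h1
        have hzp : z s ^ (n + 1) =
            (n + 1) * (c - μ * z s - ε * Real.sqrt (1 - z' s ^ 2)) := by
          have h3 : c - μ * z s - ε * Real.sqrt (1 - z' s ^ 2) =
              1 / (n + 1) * z s ^ (n + 1) := by linarith
          rw [h3, ← mul_assoc, mul_one_div, div_self (ne_of_lt hn1), one_mul]
        have : z s ^ (n + 1) ≤ (n + 1) * (-(|c| + |μ| + 1)) := by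
          rw [hzp]
          exact mul_le_mul_of_nonpos_left hk (le_of_lt hn1)
        linarith
      exact (this.exists).elim fun _ h => h
    · -- n = -1 : the log term blows down
      have hlog : Filter.Tendsto (fun s => Real.log (z s)) (nhdsWithin s₁ I)
          Filter.atBot :=
        Real.tendsto_log_nhdsGT_zero.comp hz0
      have hsmall : ∀ᶠ s in nhdsWithin s₁ I,
          Real.log (z s) < -(|c| + |μ| + 1) :=
        hlog.eventually_lt_atBot _
      have : ∀ᶠ s in nhdsWithin s₁ I, False := by
        filter_upwards [hsmall, hz1, eventually_mem_nhdsWithin] with s hb h1 hs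
        have hE := hFI s hs
        have hk := key s hs h1
        have : Real.log (z s) = c - μ * z s - ε * Real.sqrt (1 - z' s ^ 2) := by
          linarith
        linarith
      exact (this.exists).elim fun _ h => h
  · exact fun s hs => ne_of_gt (hzpos s hs)
end

section
/- Let n ∈ ℝ with n ≠ 0 and n not an even natural number, μ ∈ ℝ, and let γ be a simple closed C² unit-speed curve in ℝ² bounding a region Ω, with signed curvature κ(s) = z(s)ⁿ + μ (where z is the second coordinate and z > 0 on γ and Ω if n < 0 or n ∉ ℤ). Then ∫_Ω n·z^{n-1} dA = 0, and since the integrand has constant sign (z^{n-1} > 0 on Ω when n-1 is not odd, i.e., n not even), no such curve exists. -/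
/-!
At a critical point `σ` of the height `z`, the phase curve `(z, y', z')` solves the autonomous
system `(a, p, q)' = (q, -f a * q, f a * p)`, which is reversible under `q ↦ -q`; hence the curve is
symmetric in the vertical line through `σ`. Two such symmetries compose to a translation, so, `y`
being bounded, all critical points have the same `y`, and simplicity leaves only `σ` and
`σ + L / 2` modulo `L`. On the arc between them `z' ≠ 0` and `y ≠ y σ`, while integrating
`z'' = f(z) y'` by parts along it gives `∫ f'(z) z' (y - y σ) = 0`: this is `∫_Ω f'(z) dA = 0` for
the region `Ω` between the arc and the chord. For `f(z) = zⁿ + μ` the integrand has constant sign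
and does not vanish identically unless `n` is an even natural number.
-/

open Set Function
open scoped NNReal

theorem Function.Periodic.exists_int_mul_eq_sub_of_injOn {α : Type*} {g : ℝ → α} {L : ℝ}
    (hg : Periodic g L) (hL : 0 < L) (hinj : InjOn g (Ico 0 L)) {s t : ℝ} (hst : g s = g t) :
    ∃ k : ℤ, s - t = k * L := by
  have hmod (r : ℝ) : g (toIcoMod hL 0 r) = g r := by
    rw [toIcoMod, hg.sub_zsmul_eq]
  have hmem (r : ℝ) : toIcoMod hL 0 r ∈ Ico 0 L := by
    simpa using toIcoMod_mem_Ico hL 0 r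
  obtain ⟨k, hk⟩ := (toIcoMod_eq_toIcoMod hL).1 <|
    hinj (hmem t) (hmem s) (by rw [hmod, hmod, hst])
  exact ⟨k, by rw [hk, zsmul_eq_mul]⟩

lemma Int.cast_mul_notMem_Ioo {L : ℝ} (hL : 0 < L) (k : ℤ) : (k : ℝ) * L ∉ Ioo 0 L := by
  rintro ⟨hpos, hlt⟩
  have h0 : (0 : ℝ) < k := pos_of_mul_pos_left hpos hL.le
  have h1 : (k : ℝ) < 1 := by nlinarith
  have : (0 : ℤ) < k := by exact_mod_cast h0
  have : k < 1 := by exact_mod_cast h1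
  omega

lemma eq_zero_of_isBounded_of_add_eq_add {y : ℝ → ℝ} {δ c : ℝ}
    (hy : ∀ s, y (s + δ) = y s + c) (hb : Bornology.IsBounded (range y)) : c = 0 := by
  obtain ⟨B, hB⟩ := isBounded_iff_forall_norm_le.1 hb
  have hiter (k : ℕ) : y (k * δ) = y 0 + k * c := by
    induction k with
    | zero => simp
    | succ k ih => rw [Nat.cast_succ, add_mul, one_mul, hy, ih]; ring
  by_contra hc
  obtain ⟨k, hk⟩ := exists_nat_gt (2 * B / |c|)
  have hle : |k * c| ≤ 2 * B := by
    have h1 := hB _ (mem_range_self (k * δ))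
    have h2 := hB _ (mem_range_self 0)
    rw [Real.norm_eq_abs, hiter] at h1
    rw [Real.norm_eq_abs] at h2
    calc |k * c| = |(y 0 + k * c) - y 0| := by ring_nf
      _ ≤ |y 0 + k * c| + |y 0| := abs_sub _ _
      _ ≤ 2 * B := by linarith
  rw [div_lt_iff₀ (abs_pos.2 hc)] at hk
  rw [abs_mul, Nat.abs_cast] at hle
  linarith

lemma mul_nonneg_of_ne_zero_on_Ioo {g : ℝ → ℝ} {a b x w : ℝ} (hg : ContinuousOn g (Icc a b))
    (h0 : ∀ c ∈ Ioo a b, g c ≠ 0) (hx : x ∈ Icc a b) (hw : w ∈ Icc a b) : 0 ≤ g x * g w := by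
  wlog hxw : x ≤ w generalizing x w
  · rw [mul_comm]; exact this hw hx (le_of_not_ge hxw)
  by_contra! hneg
  have hsub : Icc x w ⊆ Icc a b := Icc_subset_Icc hx.1 hw.2
  have hzero : (0 : ℝ) ∈ g '' Ioo x w := by
    rcases mul_neg_iff.1 hneg with ⟨hgx, hgw⟩ | ⟨hgx, hgw⟩
    · exact intermediate_value_Ioo' hxw (hg.mono hsub) ⟨hgw, hgx⟩
    · exact intermediate_value_Ioo hxw (hg.mono hsub) ⟨hgx, hgw⟩
  obtain ⟨c, hc, hgc⟩ := hzero
  exact h0 c ⟨hx.1.trans_lt hc.1, hc.2.trans_le hw.2⟩ hgc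

lemma intervalIntegral.integral_ne_zero_of_mul_nonneg {G : ℝ → ℝ} {a b w : ℝ} (hab : a < b)
    (hG : ContinuousOn G (Icc a b)) (hw : w ∈ Icc a b) (hGw : G w ≠ 0)
    (hsign : ∀ x ∈ Icc a b, 0 ≤ G x * G w) : ∫ x in a..b, G x ≠ 0 := by
  intro h0
  have hpos : 0 < ∫ x in a..b, G x * G w := intervalIntegral.integral_pos hab
    (hG.mul continuousOn_const) (fun x hx => hsign x (Ioc_subset_Icc_self hx))
    ⟨w, hw, mul_self_pos.2 hGw⟩
  rw [intervalIntegral.integral_mul_const, h0, zero_mul] at hpos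
  exact hpos.false

theorem ODE_solution_eq_of_reversible {E : Type*} [NormedAddCommGroup E] [NormedSpace ℝ E]
    {V : E → E} {S : Set E} {K : ℝ≥0} (hV : LipschitzOnWith K V S) (R : E →L[ℝ] E)
    (hRS : MapsTo R S S) (hVR : ∀ x ∈ S, V (R x) = -R (V x)) {u : ℝ → E}
    (hu : ∀ t, HasDerivAt u (V (u t)) t) (huS : ∀ t, u t ∈ S) {σ : ℝ} (hσ : R (u σ) = u σ)
    (t : ℝ) : u t = R (u (2 * σ - t)) := by
  have hreflect (t : ℝ) : HasDerivAt (fun t => R (u (2 * σ - t))) (V (R (u (2 * σ - t)))) t := by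
    have := R.hasFDerivAt.comp_hasDerivAt t
      ((hu (2 * σ - t)).scomp t ((hasDerivAt_id t).const_sub (2 * σ)))
    rwa [hVR _ (huS _), ← map_neg, ← neg_one_smul ℝ (V _)]
  refine congrFun (ODE_solution_unique_univ (v := fun _ => V) (s := fun _ => S) (t₀ := σ)
    (fun _ => hV) (fun t => ⟨hu t, huS t⟩) (fun t => ⟨hreflect t, hRS (huS _)⟩) ?_) t
  simp [two_mul, hσ]

/-- `s ↦ (y s, z s)` is an `L`-periodic unit-speed curve with velocity `(y', z')` and acceleration
`(y'', z'')` whose signed curvature at `s` is `f (z s)`. -/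
structure IsClosedCurveOfCurvature (L : ℝ) (f y z y' z' y'' z'' : ℝ → ℝ) : Prop where
  period_pos : 0 < L
  hasDerivAt_y : ∀ s, HasDerivAt y (y' s) s
  hasDerivAt_z : ∀ s, HasDerivAt z (z' s) s
  hasDerivAt_y' : ∀ s, HasDerivAt y' (y'' s) s
  hasDerivAt_z' : ∀ s, HasDerivAt z' (z'' s) s
  unit_speed : ∀ s, y' s ^ 2 + z' s ^ 2 = 1
  periodic_y : Periodic y L
  periodic_z : Periodic z L
  curvature_eq : ∀ s, y' s * z'' s - z' s * y'' s = f (z s)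
  contDiffAt_curvature : ∀ s, ContDiffAt ℝ 1 f (z s)

namespace IsClosedCurveOfCurvature

variable {L σ τ : ℝ} {f y z y' z' y'' z'' : ℝ → ℝ}

section

variable (hc : IsClosedCurveOfCurvature L f y z y' z' y'' z'')
include hc

theorem continuous_y : Continuous y :=
  continuous_iff_continuousAt.2 fun s => (hc.hasDerivAt_y s).continuousAt

theorem continuous_z : Continuous z :=
  continuous_iff_continuousAt.2 fun s => (hc.hasDerivAt_z s).continuousAt

theorem continuous_y' : Continuous y' :=
  continuous_iff_continuousAt.2 fun s => (hc.hasDerivAt_y' s).continuousAt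

theorem continuous_z' : Continuous z' :=
  continuous_iff_continuousAt.2 fun s => (hc.hasDerivAt_z' s).continuousAt

theorem continuous_curvature : Continuous fun s => f (z s) :=
  continuous_iff_continuousAt.2 fun s =>
    (hc.contDiffAt_curvature s).continuousAt.comp hc.continuous_z.continuousAt

theorem continuous_deriv_curvature : Continuous fun s => deriv f (z s) :=
  continuous_iff_continuousAt.2 fun s =>
    (((hc.contDiffAt_curvature s).continuousAt_fderiv one_ne_zero).clm_apply
      continuousAt_const).comp hc.continuous_z.continuousAt

theorem hasDerivAt_curvature (s : ℝ) :
    HasDerivAt (fun s => f (z s)) (deriv f (z s) * z' s) s :=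
  ((hc.contDiffAt_curvature s).differentiableAt one_ne_zero).hasDerivAt.comp s (hc.hasDerivAt_z s)

theorem velocity_orthogonal_acceleration (s : ℝ) : y' s * y'' s + z' s * z'' s = 0 := by
  have hspeed := ((hc.hasDerivAt_y' s).pow 2).add ((hc.hasDerivAt_z' s).pow 2)
  rw [show y' ^ 2 + z' ^ 2 = fun _ => (1 : ℝ) from funext hc.unit_speed] at hspeed
  linear_combination (hspeed.unique (hasDerivAt_const s 1)) / 2

theorem z''_eq (s : ℝ) : z'' s = f (z s) * y' s := by
  linear_combination y' s * hc.curvature_eq s + z' s * hc.velocity_orthogonal_acceleration s -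
    z'' s * hc.unit_speed s

theorem y''_eq (s : ℝ) : y'' s = -f (z s) * z' s := by
  linear_combination -z' s * hc.curvature_eq s + y' s * hc.velocity_orthogonal_acceleration s -
    y'' s * hc.unit_speed s

theorem reflect (hσ : z' σ = 0) (s : ℝ) : z s = z (2 * σ - s) ∧ y' s = y' (2 * σ - s) := by
  set V : ℝ × ℝ × ℝ → ℝ × ℝ × ℝ := fun x => (x.2.2, -f x.1 * x.2.2, f x.1 * x.2.1)
  set S : Set (ℝ × ℝ × ℝ) := range z ×ˢ (Icc (-1) 1 ×ˢ Icc (-1) 1)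
  set R : ℝ × ℝ × ℝ →L[ℝ] ℝ × ℝ × ℝ :=
    (ContinuousLinearMap.id ℝ ℝ).prodMap
      ((ContinuousLinearMap.id ℝ ℝ).prodMap (-ContinuousLinearMap.id ℝ ℝ))
  have hR (x : ℝ × ℝ × ℝ) : R x = (x.1, x.2.1, -x.2.2) := rfl
  have hVS : ContDiffOn ℝ 1 V S := by
    rintro x ⟨⟨s, hs⟩, -⟩
    have hf : ContDiffAt ℝ 1 (fun x : ℝ × ℝ × ℝ => f x.1) x :=
      (hs ▸ hc.contDiffAt_curvature s).comp x contDiffAt_fst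
    exact (contDiffAt_snd.snd.prodMk ((hf.neg.mul contDiffAt_snd.snd).prodMk
      (hf.mul contDiffAt_snd.fst))).contDiffWithinAt
  have hS : IsCompact S := (hc.periodic_z.compact_of_continuous hc.period_pos.ne'
    hc.continuous_z).prod (isCompact_Icc.prod isCompact_Icc)
  have hSconv : Convex ℝ S :=
    (isPreconnected_range hc.continuous_z).convex.prod ((convex_Icc _ _).prod (convex_Icc _ _))
  obtain ⟨K, hK⟩ := hVS.exists_lipschitzOnWith one_ne_zero hSconv hS
  have hmem (s : ℝ) : (z s, y' s, z' s) ∈ S := by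
    refine ⟨mem_range_self s, ⟨?_, ?_⟩, ⟨?_, ?_⟩⟩ <;> nlinarith [hc.unit_speed s]
  have hphase (s : ℝ) : HasDerivAt (fun s => (z s, y' s, z' s)) (V (z s, y' s, z' s)) s := by
    convert (hc.hasDerivAt_z s).prodMk ((hc.hasDerivAt_y' s).prodMk (hc.hasDerivAt_z' s))
      using 1
    simp only [V, hc.y''_eq, hc.z''_eq]
  have := ODE_solution_eq_of_reversible (σ := σ) hK R
    (fun x hx => by
      simp only [S, hR, mem_prod, mem_Icc] at hx ⊢
      exact ⟨hx.1, hx.2.1, by linarith [hx.2.2.2], by linarith [hx.2.2.1]⟩)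
    (by intro x _; simp only [V, hR, Prod.neg_mk]; ring_nf) hphase hmem
    (by simp [hR, hσ]) s
  simp only [hR, Prod.mk.injEq] at this
  exact ⟨this.1, this.2.1⟩

theorem periodic_point : Periodic (fun s => (y s, z s)) L := fun s => by
  simp only [hc.periodic_y s, hc.periodic_z s]

theorem y_reflect (hσ : z' σ = 0) (s : ℝ) : y (2 * σ - s) = 2 * y σ - y s := by
  have hD (t : ℝ) : HasDerivAt (fun t => y (2 * σ - t) + y t) 0 t := by
    have := ((hc.hasDerivAt_y _).scomp t ((hasDerivAt_id' t).const_sub (2 * σ))).add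
      (hc.hasDerivAt_y t)
    rwa [← (hc.reflect hσ t).2, neg_one_smul, neg_add_cancel] at this
  have := is_const_of_deriv_eq_zero (fun t => (hD t).differentiableAt) (fun t => (hD t).deriv) s σ
  simp only [show 2 * σ - σ = σ by ring] at this
  linarith

theorem y_eq_of_deriv_eq_zero (hσ : z' σ = 0) (hτ : z' τ = 0) : y σ = y τ := by
  have hshift (s : ℝ) : y (s + 2 * (σ - τ)) = y s + 2 * (y σ - y τ) := by
    rw [show s + 2 * (σ - τ) = 2 * σ - (2 * τ - s) by ring, hc.y_reflect hσ, hc.y_reflect hτ]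
    ring
  have := eq_zero_of_isBounded_of_add_eq_add hshift
    (hc.periodic_y.isBounded_of_continuous hc.period_pos.ne' hc.continuous_y)
  linarith

theorem integral_deriv_curvature_mul_eq_zero (hσ : z' σ = 0) (hτ : z' τ = 0) (hy : y τ = y σ) :
    ∫ s in σ..τ, deriv f (z s) * z' s * (y s - y σ) = 0 := by
  have hparts := intervalIntegral.integral_mul_deriv_eq_deriv_mul (a := σ) (b := τ)
    (fun s _ => hc.hasDerivAt_curvature s) (fun s _ => (hc.hasDerivAt_y s).sub_const (y σ))
    ((hc.continuous_deriv_curvature.mul hc.continuous_z').intervalIntegrable _ _)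
    (hc.continuous_y'.intervalIntegrable _ _)
  have hz'' : ∫ s in σ..τ, f (z s) * y' s = 0 := by
    have hderiv (s : ℝ) : HasDerivAt z' (f (z s) * y' s) s := hc.z''_eq s ▸ hc.hasDerivAt_z' s
    rw [intervalIntegral.integral_eq_sub_of_hasDerivAt (fun s _ => hderiv s)
      ((hc.continuous_curvature.mul hc.continuous_y').intervalIntegrable _ _), hσ, hτ, sub_self]
  rw [hz'', hy, sub_self] at hparts
  linarith

section Simple

variable (hinj : InjOn (fun s => (y s, z s)) (Ico 0 L))
include hinj

/-- `2 * σ - τ` and `τ` parametrize the same point of the curve. -/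
theorem exists_int_mul_eq_of_deriv_eq_zero (hσ : z' σ = 0) (hτ : z' τ = 0) :
    ∃ k : ℤ, 2 * (σ - τ) = k * L := by
  obtain ⟨k, hk⟩ := hc.periodic_point.exists_int_mul_eq_sub_of_injOn hc.period_pos hinj
    (s := 2 * σ - τ) (t := τ) (by
      simp only [hc.y_reflect hσ, hc.y_eq_of_deriv_eq_zero hσ hτ, ← (hc.reflect hσ τ).1]
      ring_nf)
  exact ⟨k, by rw [← hk]; ring⟩

theorem deriv_add_half_period_eq_zero (hσ : z' σ = 0) : z' (σ + L / 2) = 0 := by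
  have hL := hc.period_pos
  obtain ⟨c, hcI, hc0⟩ := exists_hasDerivAt_eq_zero (by linarith : σ < σ + L)
    hc.continuous_z.continuousOn (hc.periodic_z σ).symm fun t _ => hc.hasDerivAt_z t
  obtain ⟨k, hk⟩ := hc.exists_int_mul_eq_of_deriv_eq_zero hinj hc0 hσ
  have hk1 : k = 1 := by
    have h0 : (0 : ℝ) < k := by nlinarith [hcI.1]
    have h2 : (k : ℝ) < 2 := by nlinarith [hcI.2]
    have : (0 : ℤ) < k := by exact_mod_cast h0
    have : k < 2 := by exact_mod_cast h2
    omega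
  subst hk1
  rwa [show σ + L / 2 = c by push_cast at hk; linarith]

theorem deriv_ne_zero_of_mem_Ioo (hσ : z' σ = 0) {s : ℝ} (hs : s ∈ Ioo σ (σ + L / 2)) :
    z' s ≠ 0 := by
  intro hs0
  obtain ⟨k, hk⟩ := hc.exists_int_mul_eq_of_deriv_eq_zero hinj hs0 hσ
  exact Int.cast_mul_notMem_Ioo hc.period_pos k
    ⟨by rw [← hk]; linarith [hs.1], by rw [← hk]; linarith [hs.2]⟩

/-- Otherwise the mirror image of `s` in the critical point `σ + L / 2` would parametrize the same
point of the curve. -/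
theorem y_ne_of_mem_Ioo (hσ : z' σ = 0) {s : ℝ} (hs : s ∈ Ioo σ (σ + L / 2)) : y s ≠ y σ := by
  intro hys
  have hτ := hc.deriv_add_half_period_eq_zero hinj hσ
  obtain ⟨k, hk⟩ := hc.periodic_point.exists_int_mul_eq_sub_of_injOn hc.period_pos hinj
    (s := 2 * (σ + L / 2) - s) (t := s) (by
      simp only [hc.y_reflect hτ, hc.y_eq_of_deriv_eq_zero hτ hσ, hys, ← (hc.reflect hτ s).1]
      ring_nf)
  exact Int.cast_mul_notMem_Ioo hc.period_pos k
    ⟨by rw [← hk]; linarith [hs.2], by rw [← hk]; linarith [hs.1]⟩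

theorem exists_deriv_curvature_ne_zero (hσ : z' σ = 0)
    (hzero : (range z ∩ {a | deriv f a = 0}).Subsingleton) :
    ∃ w ∈ Ioo σ (σ + L / 2), deriv f (z w) ≠ 0 := by
  have hL := hc.period_pos
  have hz : z (σ + L / 6) ≠ z (σ + L / 3) := by
    intro heq
    obtain ⟨c, hcI, hc0⟩ := exists_hasDerivAt_eq_zero (by linarith) hc.continuous_z.continuousOn
      heq fun t _ => hc.hasDerivAt_z t
    exact hc.deriv_ne_zero_of_mem_Ioo hinj hσ
      ⟨by linarith [hcI.1], by linarith [hcI.2]⟩ hc0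
  by_contra! h
  exact hz (hzero ⟨mem_range_self _, h _ ⟨by linarith, by linarith⟩⟩
    ⟨mem_range_self _, h _ ⟨by linarith, by linarith⟩⟩)

end Simple

theorem not_injOn (hsign : ∀ a ∈ range z, ∀ b ∈ range z, 0 ≤ deriv f a * deriv f b)
    (hzero : (range z ∩ {a | deriv f a = 0}).Subsingleton) :
    ¬ InjOn (fun s => (y s, z s)) (Ico 0 L) := by
  intro hinj
  have hL := hc.period_pos
  obtain ⟨σ, -, hσ⟩ := exists_hasDerivAt_eq_zero hL hc.continuous_z.continuousOn
    (by simpa using (hc.periodic_z 0).symm) fun t _ => hc.hasDerivAt_z t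
  have hτ := hc.deriv_add_half_period_eq_zero hinj hσ
  obtain ⟨w, hw, hfw⟩ := hc.exists_deriv_curvature_ne_zero hinj hσ hzero
  have hz'_sign (x : ℝ) (hx : x ∈ Icc σ (σ + L / 2)) : 0 ≤ z' x * z' w :=
    mul_nonneg_of_ne_zero_on_Ioo hc.continuous_z'.continuousOn
      (fun _ hs => hc.deriv_ne_zero_of_mem_Ioo hinj hσ hs) hx (Ioo_subset_Icc_self hw)
  have hy_sign (x : ℝ) (hx : x ∈ Icc σ (σ + L / 2)) : 0 ≤ (y x - y σ) * (y w - y σ) :=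
    mul_nonneg_of_ne_zero_on_Ioo (hc.continuous_y.sub continuous_const).continuousOn
      (fun _ hs => sub_ne_zero.2 (hc.y_ne_of_mem_Ioo hinj hσ hs)) hx (Ioo_subset_Icc_self hw)
  refine intervalIntegral.integral_ne_zero_of_mul_nonneg
    (G := fun s => deriv f (z s) * z' s * (y s - y σ)) (by linarith)
    ((hc.continuous_deriv_curvature.mul hc.continuous_z').mul
      (hc.continuous_y.sub continuous_const)).continuousOn (Ioo_subset_Icc_self hw) ?_
    (fun x hx => ?_)
    (hc.integral_deriv_curvature_mul_eq_zero hσ hτ (hc.y_eq_of_deriv_eq_zero hτ hσ))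
  · exact mul_ne_zero (mul_ne_zero hfw (hc.deriv_ne_zero_of_mem_Ioo hinj hσ hw))
      (sub_ne_zero.2 (hc.y_ne_of_mem_Ioo hinj hσ hw))
  · calc 0 ≤ deriv f (z x) * deriv f (z w) * (z' x * z' w) * ((y x - y σ) * (y w - y σ)) :=
          mul_nonneg (mul_nonneg (hsign _ (mem_range_self x) _ (mem_range_self w))
            (hz'_sign x hx)) (hy_sign x hx)
      _ = _ := by ring

end

theorem not_injOn_rpow {n μ : ℝ}
    (hc : IsClosedCurveOfCurvature L (fun a => a ^ n + μ) y z y' z' y'' z'') (hn : n ≠ 0)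
    (hz : ∀ s, 0 < z s) : ¬ InjOn (fun s => (y s, z s)) (Ico 0 L) := by
  have hderiv (s : ℝ) : deriv (fun a => a ^ n + μ) (z s) = n * z s ^ (n - 1) := by
    simp [(hz s).ne']
  refine hc.not_injOn ?_ ?_
  · rintro _ ⟨s, rfl⟩ _ ⟨t, rfl⟩
    rw [hderiv, hderiv]
    have := Real.rpow_pos_of_pos (hz s) (n - 1)
    have := Real.rpow_pos_of_pos (hz t) (n - 1)
    calc (0 : ℝ) ≤ n ^ 2 * (z s ^ (n - 1) * z t ^ (n - 1)) := by positivity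
      _ = _ := by ring
  · rintro _ ⟨⟨s, rfl⟩, hs⟩
    rw [mem_ofPred_eq, hderiv] at hs
    exact absurd hs (mul_ne_zero hn (Real.rpow_pos_of_pos (hz s) _).ne')

theorem not_injOn_pow_of_odd {k : ℕ} {μ : ℝ}
    (hc : IsClosedCurveOfCurvature L (fun a => a ^ k + μ) y z y' z' y'' z'') (hk : Odd k) :
    ¬ InjOn (fun s => (y s, z s)) (Ico 0 L) := by
  have hderiv (a : ℝ) : deriv (fun a => a ^ k + μ) a = k * a ^ (k - 1) := by simp
  have heven : Even (k - 1) := Nat.Odd.sub_odd hk odd_one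
  refine hc.not_injOn ?_ ?_
  · intro a _ b _
    rw [hderiv, hderiv]
    exact mul_nonneg (mul_nonneg k.cast_nonneg (heven.pow_nonneg a))
      (mul_nonneg k.cast_nonneg (heven.pow_nonneg b))
  · refine (subsingleton_singleton (a := (0 : ℝ))).anti fun a ⟨_, ha⟩ => ?_
    rw [mem_ofPred_eq, hderiv] at ha
    exact eq_zero_of_pow_eq_zero ((mul_eq_zero.1 ha).resolve_left (Nat.cast_ne_zero.2 hk.pos.ne'))

end IsClosedCurveOfCurvature

theorem no_simple_closed_n_elastic_general
    (n μ L : ℝ) (hL : 0 < L)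
    (hnoteven : ¬∃ k : ℕ, Even k ∧ n = (k : ℝ))
    (y z y' z' y'' z'' : ℝ → ℝ)
    (hy : ∀ s, HasDerivAt y (y' s) s) (hz : ∀ s, HasDerivAt z (z' s) s)
    (hy' : ∀ s, HasDerivAt y' (y'' s) s) (hz' : ∀ s, HasDerivAt z' (z'' s) s)
    (hunit : ∀ s, y' s ^ 2 + z' s ^ 2 = 1)
    (hclosed : ∀ s, y (s + L) = y s ∧ z (s + L) = z s)
    (hsimple : Set.InjOn (fun s => (y s, z s)) (Set.Ico 0 L))
    (hzpos : (n < 0 ∨ ¬∃ k : ℤ, n = (k : ℝ)) → ∀ s, 0 < z s)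
    (hκ : ∀ s, y' s * z'' s - z' s * y'' s = z s ^ n + μ) :
    False := by
  have hcurve {f : ℝ → ℝ} (hκ' : ∀ s, y' s * z'' s - z' s * y'' s = f (z s))
      (hf : ∀ s, ContDiffAt ℝ 1 f (z s)) : IsClosedCurveOfCurvature L f y z y' z' y'' z'' :=
    ⟨hL, hy, hz, hy', hz', hunit, fun s => (hclosed s).1, fun s => (hclosed s).2, hκ', hf⟩
  by_cases hpos : n < 0 ∨ ¬∃ k : ℤ, n = (k : ℝ)
  · have hz0 := hzpos hpos
    refine (hcurve hκ fun s => ?_).not_injOn_rpow (fun h => hnoteven ⟨0, by simp, by simp [h]⟩)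
      hz0 hsimple
    exact (Real.contDiffAt_rpow_const_of_ne (hz0 s).ne').add contDiffAt_const
  · simp only [not_or, not_lt, not_not] at hpos
    obtain ⟨hn, k, rfl⟩ := hpos
    lift k to ℕ using (by exact_mod_cast hn)
    simp only [Int.cast_natCast, Real.rpow_natCast] at hκ
    exact (hcurve hκ fun s => (contDiffAt_id.pow k).add contDiffAt_const).not_injOn_pow_of_odd
      (Nat.not_even_iff_odd.1 fun he => hnoteven ⟨k, he, by simp⟩) hsimple

/-- If `n` is not an even natural number (`n ≠ 0`), there is no simple closed `C²`
unit-speed planar curve with signed curvature `κ(s) = z(s)ⁿ + μ`, where `z` is the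
second coordinate (positive along the curve when `n < 0` or `n ∉ ℤ`). -/
theorem no_simple_closed_n_elastic
    (n μ L : ℝ) (hn0 : n ≠ 0) (hL : 0 < L)
    (hnoteven : ¬∃ k : ℕ, Even k ∧ n = (k : ℝ))
    (y z y' z' y'' z'' : ℝ → ℝ)
    (hy : ∀ s, HasDerivAt y (y' s) s) (hz : ∀ s, HasDerivAt z (z' s) s)
    (hy' : ∀ s, HasDerivAt y' (y'' s) s) (hz' : ∀ s, HasDerivAt z' (z'' s) s)
    (hC2 : Continuous y'' ∧ Continuous z'')
    (hunit : ∀ s, y' s ^ 2 + z' s ^ 2 = 1)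
    (hclosed : ∀ s, y (s + L) = y s ∧ z (s + L) = z s)
    (hsimple : Set.InjOn (fun s => (y s, z s)) (Set.Ico 0 L))
    (hzpos : (n < 0 ∨ ¬∃ k : ℤ, n = (k : ℝ)) → ∀ s, 0 < z s)
    (hκ : ∀ s, y' s * z'' s - z' s * y'' s = z s ^ n + μ) :
    False :=
  no_simple_closed_n_elastic_general n μ L hL hnoteven y z y' z' y'' z'' hy hz hy' hz' hunit hclosed
    hsimple hzpos hκ
end

section
/- Let n be an even natural number and let (y, z, θ) solve y' = cos θ, z' = sin θ, θ' = zⁿ + μ with initial conditions (0, 0, π/2). Suppose (1/(n+1)) z^{n+1} + μ z + cos θ = 0 holds along the solution (the first integral with c = 0). If μ < 0 and there exists s₁ > 0 with θ'(s₁) = 0, then setting z₁ = z(s₁) one has μ = -z₁ⁿ and cos θ(s₁) = (n/(n+1)) (-μ)^{(n+1)/n}. Consequently, if (n/(n+1)) (-μ)^{(n+1)/n} > 1, i.e., μ < -((n+1)/n)^{n/(n+1)}, then θ' never vanishes where cos θ(s₁) would need to lie in [-1, 1]. -/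
/-- Simplicity criterion for closed free `n`-elastic curves, `n` even natural:
for a solution of `y' = cos θ, z' = sin θ, θ' = zⁿ + μ` with initial conditions
`(0, 0, π/2)` and first integral `(1/(n+1)) z^(n+1) + μ z + cos θ = 0`, if `μ < 0`
and `θ'(s₁) = 0` for some `s₁ > 0` then, with `z₁ = z(s₁)`, one has `μ = -z₁ⁿ` and
`cos θ(s₁) = (n/(n+1)) (-μ)^((n+1)/n)`; consequently, if
`(n/(n+1)) (-μ)^((n+1)/n) > 1` then `θ'` never vanishes on `(0, ∞)`. -/
theorem free_elastic_theta_monotone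
    (n : ℕ) (hn : Even n) (hn0 : n ≠ 0) (μ : ℝ) (hμ : μ < 0)
    (y z θ : ℝ → ℝ)
    (hy : ∀ s, HasDerivAt y (Real.cos (θ s)) s)
    (hz : ∀ s, HasDerivAt z (Real.sin (θ s)) s)
    (hθ : ∀ s, HasDerivAt θ (z s ^ n + μ) s)
    (hy0 : y 0 = 0) (hz0 : z 0 = 0) (hθ0 : θ 0 = Real.pi / 2)
    (hFI : ∀ s, 1/((n:ℝ)+1) * z s ^ (n+1) + μ * z s + Real.cos (θ s) = 0) :
    (∀ s₁ : ℝ, 0 < s₁ → z s₁ ^ n + μ = 0 →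
        μ = -(z s₁ ^ n) ∧
        (0 < z s₁ →
          Real.cos (θ s₁) = (n:ℝ)/((n:ℝ)+1) * (-μ) ^ (((n:ℝ)+1)/(n:ℝ)))) ∧
    ((n:ℝ)/((n:ℝ)+1) * (-μ) ^ (((n:ℝ)+1)/(n:ℝ)) > 1 →
        ∀ s₁ : ℝ, 0 < s₁ → z s₁ ^ n + μ ≠ 0) := by
  have hne : ((n:ℝ)+1) ≠ 0 := by positivity
  have hnR : (n:ℝ) ≠ 0 := Nat.cast_ne_zero.mpr hn0
  -- cosine formula
  have hcos : ∀ s₁ : ℝ, z s₁ ^ n + μ = 0 →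
      Real.cos (θ s₁) = (n:ℝ)/((n:ℝ)+1) * z s₁ ^ (n+1) := by
    intro s₁ h0
    have h := hFI s₁
    rw [div_mul_eq_mul_div, eq_div_iff hne]
    field_simp at h
    linear_combination h - (((n:ℝ)+1) * z s₁) * h0
  -- rpow formula
  have hrpow : ∀ a : ℝ, 0 < a → a ^ n = -μ →
      (-μ) ^ (((n:ℝ)+1)/(n:ℝ)) = a ^ (n+1) := by
    intro a ha han
    rw [← han, ← Real.rpow_natCast a n, ← Real.rpow_mul ha.le]
    rw [mul_div_cancel₀ _ hnR]
    rw [show ((n:ℝ)+1) = ((n+1:ℕ):ℝ) by push_cast; ring, Real.rpow_natCast]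
  refine ⟨fun s₁ hs₁ h0 => ⟨by linarith, fun hz₁ => ?_⟩, ?_⟩
  · rw [hcos s₁ h0, hrpow (z s₁) hz₁ (by linarith)]
  · intro hbig s₁ hs₁ h0
    have hane : |z s₁| ^ n = -μ := by
      rw [← abs_pow, abs_of_nonneg (hn.pow_nonneg _)]; linarith
    have haz : 0 < |z s₁| := by
      rcases eq_or_ne (z s₁) 0 with h | h
      · exfalso; rw [h] at hane; simp [zero_pow hn0] at hane; linarith
      · exact abs_pos.mpr h
    have h1 : (-μ) ^ (((n:ℝ)+1)/(n:ℝ)) = |z s₁| ^ (n+1) := hrpow _ haz hane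
    have h2 := hcos s₁ h0
    have h3 : |Real.cos (θ s₁)| ≤ 1 := Real.abs_cos_le_one _
    rw [h2, abs_mul, abs_pow, abs_of_nonneg (by positivity : (0:ℝ) ≤ (n:ℝ)/((n:ℝ)+1))] at h3
    rw [h1] at hbig
    linarith
end
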